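/- Let p and q be nonconstant polynomials with complex coefficients. Then for every w ∈ ℂ there exists t ∈ ℂ with t ≠ 0 such that p(t) + q(1/t) = w. -/

import Mathlib

/-!
With `m = deg q`, multiplying `p(t) - w + q(1/t)` by `t ^ m` gives the polynomial
`(p - w) X^m + reverse q`, of degree `deg p + m ≥ 1`, so it has a root `z`. Its constant term is
the leading coefficient of `q`, so `z ≠ 0`, and dividing back by `z ^ m` gives the claim.
-/

open Polynomial

namespace Polynomial

theorem eval_reverse_of_ne_zero {K : Type*} [Field K] (q : K[X]) {z : K} (hz : z ≠ 0) :
    q.reverse.eval z = z ^ q.natDegree * q.eval z⁻¹ := by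
  have : Invertible z⁻¹ := invertibleOfNonzero (inv_ne_zero hz)
  have h := eval₂_reverse_mul_pow (RingHom.id K) z⁻¹ q
  rw [invOf_eq_inv, inv_inv] at h
  rw [eval, eval, ← h, inv_pow, mul_left_comm, mul_inv_cancel₀ (pow_ne_zero _ hz), mul_one]

theorem natDegree_mul_X_pow_add_reverse {R : Type*} [Semiring R] {p : R[X]} (hp : 1 ≤ p.natDegree)
    (q : R[X]) : (p * X ^ q.natDegree + q.reverse).natDegree = p.natDegree + q.natDegree := by
  have hp0 : p ≠ 0 := by rintro rfl; simp at hp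
  have : Nontrivial R := nontrivial_of_ne _ _ (leadingCoeff_ne_zero.mpr hp0)
  have hdeg : (p * X ^ q.natDegree).natDegree = p.natDegree + q.natDegree :=
    natDegree_mul_X_pow _ hp0
  rw [natDegree_add_eq_left_of_natDegree_lt, hdeg]
  rw [hdeg]
  exact (reverse_natDegree_le q).trans_lt (by omega)

theorem eval_zero_mul_X_pow_add_reverse {R : Type*} [Semiring R] (p : R[X]) {q : R[X]}
    (hq : 1 ≤ q.natDegree) : (p * X ^ q.natDegree + q.reverse).eval 0 = q.leadingCoeff := by
  rw [eval_add, eval_mul_X_pow, zero_pow (by omega), mul_zero, zero_add,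
    ← coeff_zero_eq_eval_zero, coeff_zero_reverse]

theorem eval_mul_X_pow_add_reverse {K : Type*} [Field K] (p q : K[X]) {z : K} (hz : z ≠ 0) :
    (p * X ^ q.natDegree + q.reverse).eval z = z ^ q.natDegree * (p.eval z + q.eval z⁻¹) := by
  rw [eval_add, eval_mul_X_pow, eval_reverse_of_ne_zero q hz]
  ring

end Polynomial

theorem IsAlgClosed.exists_ne_zero_eval_add_eval_inv_eq {K : Type*} [Field K] [IsAlgClosed K]
    {p q : K[X]} (hp : 1 ≤ p.natDegree) (hq : 1 ≤ q.natDegree) (w : K) :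
    ∃ t : K, t ≠ 0 ∧ p.eval t + q.eval t⁻¹ = w := by
  have hpw : 1 ≤ (p - C w).natDegree := by rwa [natDegree_sub_C]
  obtain ⟨z, hz⟩ := IsAlgClosed.exists_root ((p - C w) * X ^ q.natDegree + q.reverse) <|
    (natDegree_pos_iff_degree_pos.mp <| by rw [natDegree_mul_X_pow_add_reverse hpw]; omega).ne'
  have hz0 : z ≠ 0 := by
    rintro rfl
    rw [IsRoot, eval_zero_mul_X_pow_add_reverse _ hq] at hz
    exact leadingCoeff_ne_zero.mpr (ne_zero_of_natDegree_gt hq) hz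
  rw [IsRoot, eval_mul_X_pow_add_reverse _ _ hz0, eval_sub, eval_C] at hz
  refine ⟨z, hz0, ?_⟩
  linear_combination (mul_eq_zero.mp hz).resolve_left (pow_ne_zero _ hz0)

/-- For nonconstant complex polynomials p, q and any w ∈ ℂ there is t ≠ 0 with
p(t) + q(1/t) = w. -/
theorem exists_nonzero_eval_add_eval_inv_eq (p q : Polynomial ℂ)
    (hp : 1 ≤ p.natDegree) (hq : 1 ≤ q.natDegree) (w : ℂ) :
    ∃ t : ℂ, t ≠ 0 ∧ p.eval t + q.eval (1 / t) = w := by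
  simpa only [one_div] using IsAlgClosed.exists_ne_zero_eval_add_eval_inv_eq hp hq w
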